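/- (Lemma 3.3.) Let g : X → ℝ be given by g(x) = E_{z|x}[f(x, z)] and suppose x* is the unique minimizer of g. Define quantiles q_u^<(x; θ) = Pr_{x' ~ P_θ}(g(x') < g(x)) and q_u^≤(x; θ) = Pr_{x' ~ P_θ}(g(x') ≤ g(x)), and the noise-independent utility u(x; θ) = w(q_u^<(x; θ)) if q_u^< = q_u^≤, and u(x; θ) = (q_u^≤ - q_u^<)^{-1} ∫_{q_u^<}^{q_u^≤} w(q) dq otherwise, where w : [0,1] → ℝ is non-increasing. Then x* ∈ argmax_{x ∈ X} u(x; θ) for every distribution parameter θ. -/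
import Mathlib

open MeasureTheory

lemma avg_bounds {w : ℝ → ℝ} (hw : AntitoneOn w (Set.Icc (0:ℝ) 1))
    {a b : ℝ} (h0 : 0 ≤ a) (hab : a ≤ b) (hb1 : b ≤ 1) :
    w b ≤ (if a = b then w a else (b - a)⁻¹ * ∫ q in a..b, w q) ∧
    (if a = b then w a else (b - a)⁻¹ * ∫ q in a..b, w q) ≤ w a := by
  by_cases h : a = b
  · subst h; simp
  · have hlt : a < b := lt_of_le_of_ne hab h
    have hsub : Set.uIcc a b ⊆ Set.Icc (0:ℝ) 1 := by
      rw [Set.uIcc_of_le hab]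
      exact Set.Icc_subset_Icc h0 hb1
    have hint : IntervalIntegrable w volume a b :=
      (hw.mono hsub).intervalIntegrable
    have hpos : (0:ℝ) < b - a := by linarith
    have hmem : ∀ x ∈ Set.Icc a b, x ∈ Set.Icc (0:ℝ) 1 := fun x hx =>
      ⟨le_trans h0 hx.1, le_trans hx.2 hb1⟩
    have hlow : (b - a) * w b ≤ ∫ q in a..b, w q := by
      have := intervalIntegral.integral_mono_on hab
        (intervalIntegrable_const (c := w b)) hint
        (fun x hx => hw (hmem x hx) ⟨h0.trans hab, hb1⟩ hx.2)
      simpa using this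
    have hhigh : (∫ q in a..b, w q) ≤ (b - a) * w a := by
      have := intervalIntegral.integral_mono_on hab hint
        (intervalIntegrable_const (c := w a))
        (fun x hx => hw ⟨h0, hab.trans hb1⟩ (hmem x hx) hx.1)
      simpa using this
    constructor
    · simp only [h, if_false]
      calc w b = (b - a)⁻¹ * ((b - a) * w b) := by field_simp
        _ ≤ (b - a)⁻¹ * ∫ q in a..b, w q :=
          mul_le_mul_of_nonneg_left hlow (le_of_lt (inv_pos.mpr hpos))
    · simp only [h, if_false]
      calc (b - a)⁻¹ * ∫ q in a..b, w q ≤ (b - a)⁻¹ * ((b - a) * w a) := by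
            exact mul_le_mul_of_nonneg_left hhigh (le_of_lt (inv_pos.mpr hpos))
        _ = w a := by field_simp

theorem stmt_9 {X : Type*} [MeasurableSpace X] (g : X → ℝ) (xstar : X)
    (hxs : ∀ x, x ≠ xstar → g xstar < g x)
    (Pθ : Measure X) [IsProbabilityMeasure Pθ]
    (w : ℝ → ℝ) (hw : AntitoneOn w (Set.Icc (0:ℝ) 1))
    (qlt qle : X → ℝ)
    (hqlt : ∀ x, qlt x = (Pθ {x' | g x' < g x}).toReal)
    (hqle : ∀ x, qle x = (Pθ {x' | g x' ≤ g x}).toReal)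
    (u : X → ℝ)
    (hu : ∀ x, u x = if qlt x = qle x then w (qlt x)
                     else (qle x - qlt x)⁻¹ * ∫ q in (qlt x)..(qle x), w q) :
    ∀ x, u x ≤ u xstar := by
  have hq0 : ∀ x, 0 ≤ qlt x := fun x => by rw [hqlt]; exact ENNReal.toReal_nonneg
  have hq1 : ∀ x, qle x ≤ 1 := fun x => by
    rw [hqle]
    exact ENNReal.toReal_le_of_le_ofReal zero_le_one (by simpa using prob_le_one)
  have hqq : ∀ x, qlt x ≤ qle x := fun x => by
    rw [hqlt, hqle]
    exact ENNReal.toReal_mono (measure_ne_top _ _)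
      (measure_mono (fun x' hx' => le_of_lt (Set.mem_setOf_eq ▸ hx')))
  intro x
  by_cases hx : x = xstar
  · subst hx; exact le_refl _
  · -- qle xstar ≤ qlt x
    have hkey : qle xstar ≤ qlt x := by
      rw [hqle, hqlt]
      exact ENNReal.toReal_mono (measure_ne_top _ _)
        (measure_mono (fun x' hx' => lt_of_le_of_lt hx' (hxs x hx)))
    have h1 := (avg_bounds hw (hq0 x) (hqq x) (hq1 x)).2
    have h2 := (avg_bounds hw (hq0 xstar) (hqq xstar) (hq1 xstar)).1
    rw [hu x, hu xstar]
    refine le_trans h1 (le_trans ?_ h2)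
    exact hw ⟨(hq0 xstar).trans (hqq xstar), (hq1 xstar)⟩
      ⟨hq0 x, (hqq x).trans (hq1 x)⟩ hkey
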